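/- arXiv:1105.4012 — 2 statements merged into one kernel-verified Lean document; each statement's English description precedes it below -/
import Mathlib

section
/- Let w and r be integers with 1 ≤ w < r, and suppose that gcd(p, r) = 1 for every prime p ≤ w. Then r divides the binomial coefficient C(r, w). -/
/-! Since `r * C(r-1, w-1) = w * C(r, w)`, it suffices that `r` is coprime to `w`, and any common
prime factor of `r` and `w` would be a prime `p ≤ w` dividing `r`. -/

namespace Nat

theorem dvd_choose_of_coprime {n k : ℕ} (hk : k ≠ 0) (hnk : n.Coprime k) : n ∣ n.choose k := by
  obtain ⟨k, rfl⟩ := exists_eq_succ_of_ne_zero hk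
  cases n with
  | zero => simp
  | succ n => exact hnk.dvd_of_dvd_mul_right ⟨_, (n.add_one_mul_choose_eq k).symm⟩

theorem coprime_of_forall_prime_le_coprime {n k : ℕ} (hk : k ≠ 0)
    (h : ∀ p : ℕ, p.Prime → p ≤ k → p.Coprime n) : n.Coprime k :=
  coprime_of_dvd fun p hp hpn hpk =>
    (hp.coprime_iff_not_dvd.1 (h p hp (le_of_dvd (pos_of_ne_zero hk) hpk))) hpn

end Nat

theorem stmt_0_general (w r : ℕ) (hw : 1 ≤ w)
    (h : ∀ p : ℕ, p.Prime → p ≤ w → Nat.Coprime p r) :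
    r ∣ Nat.choose r w :=
  Nat.dvd_choose_of_coprime (by omega) (Nat.coprime_of_forall_prime_le_coprime (by omega) h)

theorem stmt_0 (w r : ℕ) (hw : 1 ≤ w) (hwr : w < r)
    (h : ∀ p : ℕ, p.Prime → p ≤ w → Nat.Coprime p r) :
    r ∣ Nat.choose r w :=
  stmt_0_general w r hw h
end

section
/- The function d ↦ χ_n(d) = (1/n) * Σ_{m | n} μ(m) * d^(n/m) is monotone increasing in d for each fixed positive integer n: if d ≤ d' then χ_n(d) ≤ χ_n(d'). -/
/-!
Reindexing by `k = n / m`, `wittSum n d' - wittSum n d = ∑_{k ∣ n} μ(n/k) (d'^k - d^k)`.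
The term `k = n` has coefficient `μ 1 = 1`; every other term is at least `-(d'^k - d^k)` with
`k < n`. Since `g k = d'^k - d^k` is nonnegative and at least doubles at each step when `d' ≥ 2`,
`g n` dominates `∑_{k<n} g k`, so the difference is nonnegative, and integer division by `n`
preserves the inequality.
-/

def wittSum (n d : ℕ) : ℤ :=
  ∑ m ∈ n.divisors, (ArithmeticFunction.moebius m : ℤ) * (d : ℤ) ^ (n / m)

def witt (n d : ℕ) : ℤ := wittSum n d / n

open Finset ArithmeticFunction
open scoped ArithmeticFunction.Moebius

section PowSubPow

variable {R : Type*} [CommRing R] [LinearOrder R] [IsStrictOrderedRing R] {a b : R}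

lemma two_mul_pow_sub_pow_le (ha : 0 ≤ a) (hab : a ≤ b) (hb : 2 ≤ b) (k : ℕ) :
    2 * (b ^ k - a ^ k) ≤ b ^ (k + 1) - a ^ (k + 1) := by
  have hk : a ^ k ≤ b ^ k := pow_le_pow_left₀ ha hab k
  have hak : 0 ≤ a ^ k := pow_nonneg ha k
  calc 2 * (b ^ k - a ^ k) ≤ b * (b ^ k - a ^ k) :=
        mul_le_mul_of_nonneg_right hb (sub_nonneg.2 hk)
    _ ≤ b * (b ^ k - a ^ k) + a ^ k * (b - a) :=
        le_add_of_nonneg_right (mul_nonneg hak (sub_nonneg.2 hab))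
    _ = b ^ (k + 1) - a ^ (k + 1) := by ring

lemma sum_range_pow_sub_pow_le (ha : 0 ≤ a) (hab : a ≤ b) (hb : 2 ≤ b) (n : ℕ) :
    ∑ k ∈ range n, (b ^ k - a ^ k) ≤ b ^ n - a ^ n := by
  induction n with
  | zero => simp
  | succ n ih =>
    rw [sum_range_succ]
    linarith [two_mul_pow_sub_pow_le ha hab hb n]

end PowSubPow

lemma sum_divisors_moebius_div_mul_nonneg {n : ℕ} (hn : n ≠ 0) {g : ℕ → ℤ}
    (hg : ∀ k, 0 ≤ g k) (hdom : ∑ k ∈ range n, g k ≤ g n) :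
    0 ≤ ∑ k ∈ n.divisors, (μ (n / k) : ℤ) * g k := by
  rw [← Nat.cons_self_properDivisors hn, sum_cons, Nat.div_self (Nat.pos_of_ne_zero hn),
    moebius_apply_one, one_mul]
  have hproper : n.properDivisors ⊆ range n := fun k hk =>
    mem_range.2 (Nat.mem_properDivisors.1 hk).2
  have hlower : -∑ k ∈ range n, g k ≤ ∑ k ∈ n.properDivisors, (μ (n / k) : ℤ) * g k :=
    calc -∑ k ∈ range n, g k ≤ ∑ k ∈ n.properDivisors, -g k := by
          rw [sum_neg_distrib, neg_le_neg_iff]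
          exact sum_le_sum_of_subset_of_nonneg hproper fun k _ _ => hg k
      _ ≤ ∑ k ∈ n.properDivisors, (μ (n / k) : ℤ) * g k := sum_le_sum fun k _ => by
          have hμ : -1 ≤ (μ (n / k) : ℤ) := (abs_le.1 abs_moebius_le_one).1
          simpa using mul_le_mul_of_nonneg_right hμ (hg k)
  linarith

lemma wittSum_eq_sum_divisors {n : ℕ} (hn : n ≠ 0) (d : ℕ) :
    wittSum n d = ∑ k ∈ n.divisors, (μ (n / k) : ℤ) * (d : ℤ) ^ k := by
  rw [wittSum, ← Nat.sum_div_divisors]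
  refine sum_congr rfl fun m hm => ?_
  rw [Nat.div_div_self (Nat.dvd_of_mem_divisors hm) hn]

lemma wittSum_mono {n d d' : ℕ} (hn : n ≠ 0) (hd : 0 < d) (h : d ≤ d') :
    wittSum n d ≤ wittSum n d' := by
  rcases h.eq_or_lt with rfl | hlt
  · rfl
  have hdd' : (d : ℤ) ≤ d' := by exact_mod_cast h
  have hd'2 : (2 : ℤ) ≤ d' := by omega
  rw [← sub_nonneg, wittSum_eq_sum_divisors hn, wittSum_eq_sum_divisors hn, ← sum_sub_distrib]
  simp_rw [← mul_sub]
  exact sum_divisors_moebius_div_mul_nonneg hn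
    (fun k => sub_nonneg.2 (pow_le_pow_left₀ (by positivity) hdd' k))
    (sum_range_pow_sub_pow_le (by positivity) hdd' hd'2 n)

theorem stmt_6_general (n d d' : ℕ) (hn : 0 < n) (hd : 0 < d) (h : d ≤ d') :
    witt n d ≤ witt n d' :=
  Int.ediv_le_ediv (by exact_mod_cast hn) (wittSum_mono hn.ne' hd h)

theorem stmt_6 (n d d' : ℕ) (hn : 0 < n) (hd : 0 < d) (hd' : 0 < d') (h : d ≤ d') :
    witt n d ≤ witt n d' :=
  stmt_6_general n d d' hn hd h
end
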